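/- arXiv:2108.09565 — 11 statements merged into one kernel-verified Lean document; each statement's English description precedes it below -/
import Mathlib

section
/- Let b > 0 and 0 < p < 1, and define q0 = [(9-p)√((9-p)(1-p)) + 27 - 18p - p^2]/(8b). If q > q0, then the cubic f(s) = s^3 - p s^2 - q b (s - 1) has exactly two roots in the interval (1, ∞). -/
/-!
For `p < 1` the cubic `f(s) = s³ - p s² - c (s - 1)` is positive at `s = 1` and for large `s`,
so it has two roots in `(1, ∞)` as soon as it is negative at one point `t > 1`; it cannot have
three, since three distinct roots of a monic cubic sum to `p < 3`. Writing `r = √((9-p)(1-p))`,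
the value `c₀ = q₀ b` is the one for which `f` has the double root `t = (3 + p + r)/4 > 1`;
as `f` decreases in `c` on `(1, ∞)`, `c = q b > c₀` gives `f(t) < 0`.
-/

theorem add_add_eq_of_cubic_roots {R : Type*} [CommRing R] [IsDomain R] {a b c x y z : R}
    (hxy : x ≠ y) (hxz : x ≠ z) (hyz : y ≠ z)
    (hx : x ^ 3 + a * x ^ 2 + b * x + c = 0) (hy : y ^ 3 + a * y ^ 2 + b * y + c = 0)
    (hz : z ^ 3 + a * z ^ 2 + b * z + c = 0) :
    x + y + z = -a := by
  have hxy' : x ^ 2 + x * y + y ^ 2 + a * (x + y) + b = 0 := by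
    refine (mul_eq_zero.1 ?_).resolve_left (sub_ne_zero.2 hxy)
    linear_combination hx - hy
  have hxz' : x ^ 2 + x * z + z ^ 2 + a * (x + z) + b = 0 := by
    refine (mul_eq_zero.1 ?_).resolve_left (sub_ne_zero.2 hxz)
    linear_combination hx - hz
  have : x + y + z + a = 0 := by
    refine (mul_eq_zero.1 ?_).resolve_left (sub_ne_zero.2 hyz)
    linear_combination hxy' - hxz'
  linear_combination this

/-- Roots `s > 1` of this cubic correspond to the positive equilibria of the predator-prey
system, with `c = q b`. -/
def equilibriumCubic (p c s : ℝ) : ℝ := s ^ 3 - p * s ^ 2 - c * (s - 1)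

section EquilibriumCubic

variable {p c : ℝ}

theorem continuous_equilibriumCubic : Continuous (equilibriumCubic p c) := by
  unfold equilibriumCubic
  fun_prop

theorem equilibriumCubic_pos_of_add_one_le (hp : p < 1) (hc : 0 < c) {s : ℝ} (hs : c + 1 ≤ s) :
    0 < equilibriumCubic p c s := by
  have key : c * (s - 1) < (s - p) * s ^ 2 :=
    calc c * (s - 1) ≤ c * s ^ 2 := by gcongr; nlinarith
      _ < (s - p) * s ^ 2 := by gcongr <;> nlinarith
  unfold equilibriumCubic
  linear_combination key

theorem equilibriumCubic_lt_of_lt {c' s : ℝ} (hc : c' < c) (hs : 1 < s) :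
    equilibriumCubic p c s < equilibriumCubic p c' s := by
  unfold equilibriumCubic
  nlinarith [mul_lt_mul_of_pos_right hc (sub_pos.2 hs)]

/-- `c₀` is the minimum of `s²(s - p)/(s - 1)` over `s > 1`, attained at `t`, so that
`t` is a double root of the cubic with `c = c₀`. -/
theorem equilibriumCubic_tangent {r : ℝ} (hr : r ^ 2 = (9 - p) * (1 - p)) :
    equilibriumCubic p ((27 - 18 * p - p ^ 2 + (9 - p) * r) / 8) ((3 + p + r) / 4) = 0 := by
  unfold equilibriumCubic
  linear_combination ((r - 9 + p) / 64) * hr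

theorem exists_two_roots_of_neg (hp : p < 1) {t : ℝ} (ht : 1 < t)
    (hneg : equilibriumCubic p c t < 0) :
    ∃ s₁ s₂ : ℝ, 1 < s₁ ∧ s₁ < s₂ ∧ equilibriumCubic p c s₁ = 0 ∧
      equilibriumCubic p c s₂ = 0 ∧
      ∀ s, 1 < s → equilibriumCubic p c s = 0 → s = s₁ ∨ s = s₂ := by
  have hc : 0 < c := by
    unfold equilibriumCubic at hneg
    nlinarith [mul_pos (by positivity : 0 < t ^ 2) (by linarith : 0 < t - p)]
  have hone : 0 < equilibriumCubic p c 1 := by unfold equilibriumCubic; linarith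
  have hlarge : 0 < equilibriumCubic p c (t + c) :=
    equilibriumCubic_pos_of_add_one_le hp hc (by linarith)
  obtain ⟨s₁, ⟨h1s₁, hs₁t⟩, hs₁⟩ :=
    intermediate_value_Ioo' ht.le continuous_equilibriumCubic.continuousOn ⟨hneg, hone⟩
  obtain ⟨s₂, ⟨hts₂, -⟩, hs₂⟩ := intermediate_value_Ioo (by linarith : t ≤ t + c)
    continuous_equilibriumCubic.continuousOn ⟨hneg, hlarge⟩
  refine ⟨s₁, s₂, h1s₁, hs₁t.trans hts₂, hs₁, hs₂, fun s hs hs0 => ?_⟩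
  by_contra! hne
  have monic (x : ℝ) : equilibriumCubic p c x = x ^ 3 + -p * x ^ 2 + -c * x + c := by
    unfold equilibriumCubic; ring
  have := add_add_eq_of_cubic_roots hne.1 hne.2 (hs₁t.trans hts₂).ne
    (monic s ▸ hs0) (monic s₁ ▸ hs₁) (monic s₂ ▸ hs₂)
  linarith

end EquilibriumCubic

theorem cubic_two_roots_gt_one_general (b p q : ℝ) (hb : 0 < b) (hp1 : p < 1)
    (q0 : ℝ)
    (hq0 : q0 = ((9 - p) * Real.sqrt ((9 - p) * (1 - p)) + 27 - 18 * p - p ^ 2) / (8 * b))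
    (hq : q0 < q)
    (f : ℝ → ℝ) (hf : ∀ s, f s = s ^ 3 - p * s ^ 2 - q * b * (s - 1)) :
    ∃ s₁ s₂ : ℝ, 1 < s₁ ∧ s₁ < s₂ ∧ f s₁ = 0 ∧ f s₂ = 0 ∧
      ∀ s, 1 < s → f s = 0 → s = s₁ ∨ s = s₂ := by
  obtain rfl : f = equilibriumCubic p (q * b) := funext hf
  set r := √((9 - p) * (1 - p))
  have hr : r ^ 2 = (9 - p) * (1 - p) := Real.sq_sqrt (by nlinarith)
  have ht : 1 < (3 + p + r) / 4 := by nlinarith [Real.sqrt_nonneg ((9 - p) * (1 - p))]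
  have hc : (27 - 18 * p - p ^ 2 + (9 - p) * r) / 8 < q * b := by
    have hq0b : q0 * b = (27 - 18 * p - p ^ 2 + (9 - p) * r) / 8 := by
      rw [hq0]; field_simp; ring
    exact hq0b ▸ mul_lt_mul_of_pos_right hq hb
  refine exists_two_roots_of_neg hp1 ht ?_
  simpa [equilibriumCubic_tangent hr] using equilibriumCubic_lt_of_lt (p := p) hc ht

/-- For `b > 0`, `0 < p < 1` and `q > q0`, the cubic
`f(s) = s^3 - p s^2 - q b (s - 1)` has exactly two roots in `(1, ∞)`. -/
theorem cubic_two_roots_gt_one (b p q : ℝ) (hb : 0 < b) (hp0 : 0 < p) (hp1 : p < 1)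
    (q0 : ℝ)
    (hq0 : q0 = ((9 - p) * Real.sqrt ((9 - p) * (1 - p)) + 27 - 18 * p - p ^ 2) / (8 * b))
    (hq : q0 < q)
    (f : ℝ → ℝ) (hf : ∀ s, f s = s ^ 3 - p * s ^ 2 - q * b * (s - 1)) :
    ∃ s₁ s₂ : ℝ, 1 < s₁ ∧ s₁ < s₂ ∧ f s₁ = 0 ∧ f s₂ = 0 ∧
      ∀ s, 1 < s → f s = 0 → s = s₁ ∨ s = s₂ :=
  cubic_two_roots_gt_one_general b p q hb hp1 q0 hq0 hq f hf
end

section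
/- Let b > 0 and 0 < p < 1, and define q0 = [(9-p)√((9-p)(1-p)) + 27 - 18p - p^2]/(8b). If 0 < q < q0, then the cubic f(s) = s^3 - p s^2 - q b (s - 1) has no root in the interval (1, ∞). -/
/-- For `b > 0`, `0 < p < 1` and `0 < q < q0`, the cubic
`f(s) = s^3 - p s^2 - q b (s - 1)` has no root in `(1, ∞)`. -/
theorem cubic_no_root_gt_one (b p q : ℝ) (hb : 0 < b) (hp0 : 0 < p) (hp1 : p < 1)
    (q0 : ℝ)
    (hq0 : q0 = ((9 - p) * Real.sqrt ((9 - p) * (1 - p)) + 27 - 18 * p - p ^ 2) / (8 * b))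
    (hqpos : 0 < q) (hq : q < q0)
    (f : ℝ → ℝ) (hf : ∀ s, f s = s ^ 3 - p * s ^ 2 - q * b * (s - 1)) :
    ∀ s, 1 < s → f s ≠ 0 := by
  intro s hs
  have hD : (0:ℝ) ≤ (9 - p) * (1 - p) := by nlinarith
  set w := Real.sqrt ((9 - p) * (1 - p)) with hw
  have hw2 : w ^ 2 = (9 - p) * (1 - p) := Real.sq_sqrt hD
  have hw0 : 0 ≤ w := Real.sqrt_nonneg _
  have hq0b : q0 * b = ((9 - p) * w + 27 - 18 * p - p ^ 2) / 8 := by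
    rw [hq0]; field_simp
  have hqb : q * b < ((9 - p) * w + 27 - 18 * p - p ^ 2) / 8 := by
    rw [← hq0b]; exact mul_lt_mul_of_pos_right hq hb
  have key : 32 * (s ^ 3 - p * s ^ 2 - (((9 - p) * w + 27 - 18 * p - p ^ 2) / 8) * (s - 1))
      = (4 * s - 3 - p - w) ^ 2 * (2 * s + 3 + w - p) := by
    linear_combination (6 * s - 9 - p - w) * hw2
  have hpos : (0:ℝ) ≤ 2 * s + 3 + w - p := by nlinarith
  have h1 : (0:ℝ) ≤ (4 * s - 3 - p - w) ^ 2 * (2 * s + 3 + w - p) :=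
    mul_nonneg (sq_nonneg _) hpos
  have h2 : 0 < (((9 - p) * w + 27 - 18 * p - p ^ 2) / 8 - q * b) * (s - 1) :=
    mul_pos (by linarith) (by linarith)
  have : 0 < f s := by
    rw [hf]
    nlinarith [key, h1, h2]
  exact ne_of_gt this
end

section
/- Let b > 0 and 0 < p < 1, and define q0 = [(9-p)√((9-p)(1-p)) + 27 - 18p - p^2]/(8b). If q = q0, then the cubic f(s) = s^3 - p s^2 - q b (s - 1) has a double root at s2 = (p + √(p^2 + 3 q b))/3; that is, f(s2) = 0, f'(s2) = 0, and s2 > 1. -/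
/-- For `b > 0`, `0 < p < 1` and `q = q0`, the cubic
`f(s) = s^3 - p s^2 - q b (s - 1)` has a double root at
`s2 = (p + √(p^2 + 3 q b))/3`: `f(s2) = 0`, `f'(s2) = 0`, and `s2 > 1`. -/
theorem cubic_double_root (b p q : ℝ) (hb : 0 < b) (hp0 : 0 < p) (hp1 : p < 1)
    (q0 : ℝ)
    (hq0 : q0 = ((9 - p) * Real.sqrt ((9 - p) * (1 - p)) + 27 - 18 * p - p ^ 2) / (8 * b))
    (hq : q = q0)
    (f : ℝ → ℝ) (hf : ∀ s, f s = s ^ 3 - p * s ^ 2 - q * b * (s - 1))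
    (s2 : ℝ) (hs2 : s2 = (p + Real.sqrt (p ^ 2 + 3 * q * b)) / 3) :
    f s2 = 0 ∧ 3 * s2 ^ 2 - 2 * p * s2 - q * b = 0 ∧ 1 < s2 := by
  set r := Real.sqrt ((9 - p) * (1 - p)) with hr
  have hr0 : 0 ≤ r := Real.sqrt_nonneg _
  have hr2 : r ^ 2 = 9 - 10 * p + p ^ 2 := by
    rw [hr, Real.sq_sqrt (by nlinarith)]; ring
  have hQ : q * b = ((9 - p) * r + 27 - 18 * p - p ^ 2) / 8 := by
    rw [hq, hq0]; field_simp
  have hsq : p ^ 2 + 3 * q * b = ((9 - p + 3 * r) / 4) ^ 2 := by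
    linear_combination 3 * hQ + (-9/16 : ℝ) * hr2
  have hs2' : s2 = (p + 3 + r) / 4 := by
    rw [hs2, show p ^ 2 + 3 * q * b = ((9 - p + 3 * r) / 4) ^ 2 from hsq,
      Real.sqrt_sq (by nlinarith)]
    ring
  refine ⟨?_, ?_, ?_⟩
  · rw [hf, hs2', hQ]
    linear_combination ((r + p - 9) / 64) * hr2
  · rw [hs2', hQ]
    linear_combination (3/16 : ℝ) * hr2
  · rw [hs2']
    nlinarith [hr2, hr0]
end

section
/- Let b > 0, p > 0, q > 0. A pair (u, v) with u > 0 and v > 0 satisfies the equilibrium equations b u (1 - u) = v and p u v + q u v^2 = v if and only if s := 1/u satisfies s > 1, f(s) = 0 where f(s) = s^3 - p s^2 - q b (s - 1), and v = b(s-1)/s^2. -/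
/-! Substituting `s = 1/u`, the prey nullcline `v = b u (1 - u)` is `v = b (s - 1) / s²`, and on it
the predator equation, once the factor `v ≠ 0` is cancelled, reads `p u + q b u² (1 - u) = 1`;
multiplying by `s³` turns this into `f(s) = 0`. Positivity of `v` on the prey nullcline forces
`u < 1`, i.e. `s > 1`. -/

lemma div_sq_one_div_eq_mul_mul_one_sub (b u : ℝ) :
    b * (1 / u - 1) / (1 / u) ^ 2 = b * u * (1 - u) := by
  rcases eq_or_ne u 0 with rfl | hu
  · simp
  · field_simp

lemma predator_equation_iff {p q u v : ℝ} (hv : v ≠ 0) :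
    p * u * v + q * u * v ^ 2 = v ↔ p * u + q * u * v = 1 := by
  rw [show p * u * v + q * u * v ^ 2 = (p * u + q * u * v) * v by ring]
  exact mul_eq_right₀ hv

lemma cubic_at_inv_eq {b p q u : ℝ} (hu : u ≠ 0) :
    (1 / u) ^ 3 - p * (1 / u) ^ 2 - q * b * (1 / u - 1) =
      (1 / u) ^ 3 * (1 - (p * u + q * u * (b * u * (1 - u)))) := by
  field_simp
  ring

lemma cubic_at_inv_eq_zero_iff {b p q u : ℝ} (hu : u ≠ 0) :
    (1 / u) ^ 3 - p * (1 / u) ^ 2 - q * b * (1 / u - 1) = 0 ↔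
      p * u + q * u * (b * u * (1 - u)) = 1 := by
  rw [cubic_at_inv_eq hu, mul_eq_zero_iff_left (by simpa using hu), sub_eq_zero, eq_comm]

lemma lt_one_of_mul_mul_one_sub_pos {b u : ℝ} (hb : 0 < b) (hu : 0 < u)
    (h : 0 < b * u * (1 - u)) : u < 1 := by
  have : 0 < 1 - u := pos_of_mul_pos_right h (mul_pos hb hu).le
  linarith

theorem equilibrium_iff_root_general (b p q : ℝ) (hb : 0 < b)
    (f : ℝ → ℝ) (hf : ∀ s, f s = s ^ 3 - p * s ^ 2 - q * b * (s - 1))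
    (u v : ℝ) (hu : 0 < u) (hv : 0 < v) :
    (b * u * (1 - u) = v ∧ p * u * v + q * u * v ^ 2 = v) ↔
      (1 < 1 / u ∧ f (1 / u) = 0 ∧ v = b * (1 / u - 1) / (1 / u) ^ 2) := by
  rw [hf, cubic_at_inv_eq_zero_iff hu.ne', div_sq_one_div_eq_mul_mul_one_sub,
    predator_equation_iff hv.ne']
  constructor
  · rintro ⟨hprey, hpred⟩
    have hu1 : u < 1 := lt_one_of_mul_mul_one_sub_pos hb hu (hprey ▸ hv)
    exact ⟨one_lt_one_div hu hu1, hprey ▸ hpred, hprey.symm⟩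
  · rintro ⟨-, hroot, hprey⟩
    exact ⟨hprey.symm, hprey ▸ hroot⟩

/-- For `b, p, q > 0`, a pair `(u, v)` with `u, v > 0` satisfies the
equilibrium equations `b u (1-u) = v` and `p u v + q u v^2 = v` iff `s = 1/u`
satisfies `s > 1`, `f(s) = 0` and `v = b(s-1)/s^2`. -/
theorem equilibrium_iff_root (b p q : ℝ) (hb : 0 < b) (hp : 0 < p) (hq : 0 < q)
    (f : ℝ → ℝ) (hf : ∀ s, f s = s ^ 3 - p * s ^ 2 - q * b * (s - 1))
    (u v : ℝ) (hu : 0 < u) (hv : 0 < v) :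
    (b * u * (1 - u) = v ∧ p * u * v + q * u * v ^ 2 = v) ↔
      (1 < 1 / u ∧ f (1 / u) = 0 ∧ v = b * (1 / u - 1) / (1 / u) ^ 2) :=
  equilibrium_iff_root_general b p q hb f hf u v hu hv
end

section
/- Let b > 0, q > 0 and p > 1. Then there exists exactly one pair (u, v) with u > 0, v > 0 satisfying b u (1 - u) = v and p u v + q u v^2 = v; that is, the system u' = b u(1-u) - p u v - q u v^2, v' = p u v + q u v^2 - v possesses a unique positive equilibrium. -/
private lemma key_unique (b p q u1 u2 : ℝ) (hb : 0 < b) (hq : 0 < q) (hp : 1 < p)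
    (hu1 : 0 < u1) (hu1' : u1 < 1) (hu2 : 0 < u2) (hu2' : u2 < 1)
    (e1 : p * u1 + q * b * u1 ^ 2 * (1 - u1) = 1)
    (e2 : p * u2 + q * b * u2 ^ 2 * (1 - u2) = 1) : u1 = u2 := by
  by_contra hne
  have hd : u1 - u2 ≠ 0 := sub_ne_zero.mpr hne
  have hfac : (u1 - u2) * (p - q * b * (u1 ^ 2 + u1 * u2 + u2 ^ 2 - u1 - u2)) = 0 := by
    linear_combination e1 - e2
  have hE : p = q * b * (u1 ^ 2 + u1 * u2 + u2 ^ 2 - u1 - u2) := by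
    rcases mul_eq_zero.mp hfac with h | h
    · exact absurd h hd
    · linarith
  have hm : q * b * (u1 * u2 * (u1 + u2 - 1)) = 1 := by
    linear_combination e1 - u1 * hE
  have hqb : 0 < q * b := mul_pos hq hb
  -- From p > 1 : q b (E - m(s-1)) > 0, and E - m(s-1) = s (s - 1 - m)
  have h1 : q * b * ((u1 + u2) * (u1 + u2 - 1 - u1 * u2)) > 0 := by
    nlinarith [hE, hm, hp]
  have hs : 0 < u1 + u2 := by linarith
  have h2 : u1 + u2 - 1 - u1 * u2 > 0 := by
    by_contra h
    push_neg at h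
    nlinarith [h1, mul_nonneg hqb.le (mul_nonneg hs.le (neg_nonneg.mpr (by linarith : u1 + u2 - 1 - u1 * u2 ≤ 0)))]
  have h3 : (1 - u1) * (1 - u2) > 0 :=
    mul_pos (by linarith) (by linarith)
  nlinarith [h2, h3]

/-- For `b > 0`, `q > 0` and `p > 1`, the dimensionless system has a
unique positive equilibrium: exactly one pair `(u, v)` with `u, v > 0`,
`b u (1-u) = v` and `p u v + q u v^2 = v`. -/
theorem unique_positive_equilibrium (b p q : ℝ) (hb : 0 < b) (hq : 0 < q) (hp : 1 < p) :
    ∃! uv : ℝ × ℝ, 0 < uv.1 ∧ 0 < uv.2 ∧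
      b * uv.1 * (1 - uv.1) = uv.2 ∧
      p * uv.1 * uv.2 + q * uv.1 * uv.2 ^ 2 = uv.2 := by
  -- existence of u ∈ (0,1) with f u = 0 where f u = p u + q b u²(1-u) - 1
  set f : ℝ → ℝ := fun u => p * u + q * b * u ^ 2 * (1 - u) - 1 with hf
  have hcont : ContinuousOn f (Set.Icc (0:ℝ) 1) := by
    apply Continuous.continuousOn; continuity
  have hmem : (0:ℝ) ∈ Set.Ioo (f 0) (f 1) := by
    constructor <;> simp [hf] <;> nlinarith
  obtain ⟨u, huIoo, hu0⟩ := intermediate_value_Ioo (by norm_num : (0:ℝ) ≤ 1) hcont hmem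
  obtain ⟨hu, hu1⟩ := huIoo
  have hfu : p * u + q * b * u ^ 2 * (1 - u) = 1 := by
    have := hu0; simp [hf] at this; linarith
  set v : ℝ := b * u * (1 - u) with hv
  have hvpos : 0 < v := by
    apply mul_pos (mul_pos hb hu); linarith
  refine ⟨(u, v), ⟨hu, hvpos, rfl, ?_⟩, ?_⟩
  · show p * u * v + q * u * v ^ 2 = v
    have : p * u + q * u * v = 1 := by
      rw [hv]; linear_combination hfu
    nlinarith [this]
  · rintro ⟨u', v'⟩ ⟨hu', hv', heq1, heq2⟩
    simp only at hu' hv' heq1 heq2 ⊢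
    have h1u' : u' < 1 := by nlinarith [mul_pos hb hu', hv', heq1]
    have hdiv : p * u' + q * u' * v' = 1 := by
      have h : v' * (p * u' + q * u' * v' - 1) = 0 := by ring_nf; linear_combination heq2
      rcases mul_eq_zero.mp h with h' | h'
      · exact absurd h' (ne_of_gt hv')
      · linarith
    have hfu' : p * u' + q * b * u' ^ 2 * (1 - u') = 1 := by
      rw [← heq1] at hdiv; linarith [hdiv]; 
    have huu : u' = u := key_unique b p q u' u hb hq hp hu' h1u' hu hu1 hfu' hfu
    have hvv : v' = v := by rw [hv, ← heq1, huu]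
    exact Prod.ext huu hvv
end

section
/- Let b > 0, p > 0, q > 0 and let (u, v) with u > 0, v > 0 satisfy b u (1 - u) = v and p u v + q u v^2 = v. Consider the 2×2 real matrix J with first row (-b u, -(1 + q u v)) and second row (b(1-u), q u v). Then the trace of J equals u(q v - b) and the determinant of J equals u v f'(1/u), where f'(s) = 3 s^2 - 2 p s - q b. -/
open Matrix

section Jacobian

variable {K : Type*} [Field K]

theorem trace_predatorPrey_jacobian (b q u v : K) :
    trace !![-(b * u), -(1 + q * u * v); b * (1 - u), q * u * v] = u * (q * v - b) := by
  rw [trace_fin_two_of]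
  ring

theorem det_predatorPrey_jacobian_of_equilibrium {b p q u v : K} (hu : u ≠ 0)
    (heq1 : b * u * (1 - u) = v) (heq2 : p * u * v + q * u * v ^ 2 = v) :
    det !![-(b * u), -(1 + q * u * v); b * (1 - u), q * u * v] =
      u * v * (3 * (1 / u) ^ 2 - 2 * p * (1 / u) - q * b) := by
  rw [det_fin_two_of]
  field_simp
  -- Substitute `b u (1 - u) = v` in the off-diagonal product and `p u v = v - q u v²` on the right.
  linear_combination (1 + 2 * q * u * v) * heq1 + 2 * heq2

end Jacobian

theorem jacobian_trace_det_general (b p q : ℝ)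
    (u v : ℝ) (hu : 0 < u)
    (heq1 : b * u * (1 - u) = v) (heq2 : p * u * v + q * u * v ^ 2 = v)
    (J : Matrix (Fin 2) (Fin 2) ℝ)
    (hJ : J = !![-(b * u), -(1 + q * u * v); b * (1 - u), q * u * v]) :
    Matrix.trace J = u * (q * v - b) ∧
    J.det = u * v * (3 * (1 / u) ^ 2 - 2 * p * (1 / u) - q * b) := by
  subst hJ
  exact ⟨trace_predatorPrey_jacobian b q u v,
    det_predatorPrey_jacobian_of_equilibrium hu.ne' heq1 heq2⟩

/-- At a positive equilibrium `(u, v)`, the Jacobian matrix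
`J = !![-bu, -(1+quv); b(1-u), quv]` has trace `u(qv - b)` and determinant
`u v f'(1/u)` where `f'(s) = 3s^2 - 2ps - qb`. -/
theorem jacobian_trace_det (b p q : ℝ) (hb : 0 < b) (hp : 0 < p) (hq : 0 < q)
    (u v : ℝ) (hu : 0 < u) (hv : 0 < v)
    (heq1 : b * u * (1 - u) = v) (heq2 : p * u * v + q * u * v ^ 2 = v)
    (J : Matrix (Fin 2) (Fin 2) ℝ)
    (hJ : J = !![-(b * u), -(1 + q * u * v); b * (1 - u), q * u * v]) :
    Matrix.trace J = u * (q * v - b) ∧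
    J.det = u * v * (3 * (1 / u) ^ 2 - 2 * p * (1 / u) - q * b) :=
  jacobian_trace_det_general b p q u v hu heq1 heq2 J hJ
end

section
/- Let b > 0, q > 0 and p > 1, and let s_+ be the unique root of f(s) = s^3 - p s^2 - q b (s - 1) in (1, ∞). Define q_h = (p+b)^2/(p+b-1) and v_+ = b(s_+ - 1)/s_+^2. If q < q_h then s_+ < p + b and q v_+ < b; if q > q_h then s_+ > p + b and q v_+ > b; and q = q_h if and only if q v_+ = b. -/
private lemma f_sign (b p q : ℝ) (hb : 0 < b) (hq : 0 < q) (hp : 1 < p)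
    (sp : ℝ) (hsp : 1 < sp)
    (huniq : ∀ s, 1 < s → s ^ 3 - p * s ^ 2 - q * b * (s - 1) = 0 → s = sp)
    (s : ℝ) (hs : 1 < s) :
    (s < sp → s ^ 3 - p * s ^ 2 - q * b * (s - 1) < 0) ∧
    (sp < s → 0 < s ^ 3 - p * s ^ 2 - q * b * (s - 1)) := by
  set F : ℝ → ℝ := fun x => x ^ 3 - p * x ^ 2 - q * b * (x - 1) with hF
  have hcont : Continuous F := by continuity
  constructor
  · intro hlt
    by_contra h
    push_neg at h
    rcases eq_or_lt_of_le h with he | hpos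
    · have := huniq s hs he.symm; linarith
    · -- F 1 < 0 < F s, IVT on [1, s] gives a root c ∈ (1, s), c = sp, contra
      have h1 : F 1 < 0 := by simp only [hF]; norm_num; linarith
      have := intermediate_value_Ioo (le_of_lt hs) hcont.continuousOn
        (a := 1) (b := s)
      have h0 : (0 : ℝ) ∈ Set.Ioo (F 1) (F s) := ⟨h1, hpos⟩
      obtain ⟨c, hc, hFc⟩ := this h0
      have := huniq c hc.1 hFc
      linarith [hc.2]
  · intro hlt
    by_contra h
    push_neg at h
    rcases eq_or_lt_of_le h with he | hneg
    · have := huniq s hs he; linarith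
    · set M : ℝ := max (s + 1) (max (p + 1) (q * b + 1)) with hM
      have hMs : s < M := lt_of_lt_of_le (by linarith) (le_max_left _ _)
      have hMp : p + 1 ≤ M := le_trans (le_max_left _ _) (le_max_right _ _)
      have hMqb : q * b + 1 ≤ M := le_trans (le_max_right _ _) (le_max_right _ _)
      have hM1 : 1 < M := by linarith
      have hFM : 0 < F M := by
        simp only [hF]
        have h1 : M ^ 2 * (M - p) ≥ M ^ 2 * 1 := by
          apply mul_le_mul_of_nonneg_left (by linarith) (by positivity)
        have h2 : q * b * (M - 1) < M * M := by
          have : q * b * (M - 1) < M * (M - 1) := by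
            apply mul_lt_mul_of_pos_right (by linarith) (by linarith)
          nlinarith
        nlinarith
      obtain ⟨c, hc, hFc⟩ := intermediate_value_Ioo (le_of_lt hMs)
        hcont.continuousOn (a := s) (b := M) ⟨hneg, hFM⟩
      have := huniq c (by linarith [hc.1]) hFc
      linarith [hc.1]

/-- For `b > 0`, `q > 0`, `p > 1`, let `s₊` be the unique root of
`f(s) = s^3 - p s^2 - q b (s-1)` in `(1, ∞)` and `v₊ = b(s₊-1)/s₊^2`,
`q_h = (p+b)^2/(p+b-1)`. If `q < q_h` then `s₊ < p+b` and `q v₊ < b`;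
if `q > q_h` then `s₊ > p+b` and `q v₊ > b`; and `q = q_h ↔ q v₊ = b`. -/
theorem trace_sign_switch (b p q : ℝ) (hb : 0 < b) (hq : 0 < q) (hp : 1 < p)
    (sp : ℝ) (hsp : 1 < sp)
    (hroot : sp ^ 3 - p * sp ^ 2 - q * b * (sp - 1) = 0)
    (huniq : ∀ s, 1 < s → s ^ 3 - p * s ^ 2 - q * b * (s - 1) = 0 → s = sp)
    (qh vp : ℝ) (hqh : qh = (p + b) ^ 2 / (p + b - 1))
    (hvp : vp = b * (sp - 1) / sp ^ 2) :
    (q < qh → sp < p + b ∧ q * vp < b) ∧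
    (qh < q → p + b < sp ∧ b < q * vp) ∧
    (q = qh ↔ q * vp = b) := by
  have hA : 0 < p + b - 1 := by linarith
  have hsp2 : (0:ℝ) < sp ^ 2 := by positivity
  -- key identity: q * vp = sp - p
  have hkey : q * vp = sp - p := by
    rw [hvp]
    field_simp
    nlinarith [hroot]
  have hpb1 : (1:ℝ) < p + b := by linarith
  -- f(p+b) = b*((p+b)^2 - q*(p+b-1))
  have hFpb : (p+b) ^ 3 - p * (p+b) ^ 2 - q * b * ((p+b) - 1)
      = b * ((p + b) ^ 2 - q * (p + b - 1)) := by ring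
  have hsign := f_sign b p q hb hq hp sp hsp huniq (p + b) hpb1
  refine ⟨?_, ?_, ?_, ?_⟩
  · intro hlt
    have hq' : q * (p + b - 1) < (p + b) ^ 2 := by
      rw [hqh, lt_div_iff₀ hA] at hlt; linarith
    have hpos : 0 < (p+b) ^ 3 - p * (p+b) ^ 2 - q * b * ((p+b) - 1) := by
      rw [hFpb]; nlinarith
    have hsplt : sp < p + b := by
      by_contra hc
      push_neg at hc
      rcases eq_or_lt_of_le hc with he | hlt2
      · rw [he] at hpos; linarith [hroot]
      · linarith [hsign.1 hlt2]
    exact ⟨hsplt, by linarith [hkey]⟩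
  · intro hlt
    have hq' : (p + b) ^ 2 < q * (p + b - 1) := by
      rw [hqh, div_lt_iff₀ hA] at hlt; linarith
    have hneg : (p+b) ^ 3 - p * (p+b) ^ 2 - q * b * ((p+b) - 1) < 0 := by
      rw [hFpb]; nlinarith
    have hsplt : p + b < sp := by
      by_contra hc
      push_neg at hc
      rcases eq_or_lt_of_le hc with he | hlt2
      · rw [he] at hroot; linarith
      · linarith [hsign.2 hlt2]
    exact ⟨hsplt, by linarith [hkey]⟩
  · intro he
    have hz : (p+b) ^ 3 - p * (p+b) ^ 2 - q * b * ((p+b) - 1) = 0 := by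
      rw [hFpb]
      have : q * (p + b - 1) = (p + b) ^ 2 := by
        rw [he, hqh]; field_simp
      rw [this]; ring
    have := huniq (p + b) hpb1 hz
    rw [hkey, ← this]; ring
  · intro he
    have hspe : sp = p + b := by linarith [hkey]
    rw [hspe] at hroot
    have : q * (p + b - 1) = (p + b) ^ 2 := by nlinarith [hroot]
    rw [hqh, eq_div_iff (ne_of_gt hA)]
    linarith
end

section
/- Let b > 0, 0 < p ≤ 1, q > 0, and let s > 1 satisfy f(s) = 0 and f'(s) > 0, where f(s) = s^3 - p s^2 - q b (s - 1) and f'(s) = 3 s^2 - 2 p s - q b. Then s > [p + 3 + √((1-p)(9-p))]/4. Consequently, if in addition b < [3(1-p) + √((1-p)(9-p))]/4, then s > p + b and q v > b, where v = b(s-1)/s^2. -/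
/-- For `b > 0`, `0 < p ≤ 1`, `q > 0`, if `s > 1` satisfies
`f(s) = 0` and `f'(s) > 0`, then `s > [p+3+√((1-p)(9-p))]/4`; consequently, if
moreover `b < [3(1-p)+√((1-p)(9-p))]/4`, then `s > p + b` and `q v > b`,
where `v = b(s-1)/s^2`. -/
theorem root_lower_bound (b p q s : ℝ) (hb : 0 < b) (hp0 : 0 < p) (hp1 : p ≤ 1)
    (hq : 0 < q) (hs : 1 < s)
    (hroot : s ^ 3 - p * s ^ 2 - q * b * (s - 1) = 0)
    (hderiv : 0 < 3 * s ^ 2 - 2 * p * s - q * b)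
    (v : ℝ) (hv : v = b * (s - 1) / s ^ 2) :
    (p + 3 + Real.sqrt ((1 - p) * (9 - p))) / 4 < s ∧
    (b < (3 * (1 - p) + Real.sqrt ((1 - p) * (9 - p))) / 4 →
      p + b < s ∧ b < q * v) := by
  set r := Real.sqrt ((1 - p) * (9 - p)) with hrdef
  have hr0 : 0 ≤ r := Real.sqrt_nonneg _
  have hr2 : r ^ 2 = (1 - p) * (9 - p) := Real.sq_sqrt (by nlinarith)
  have hs0 : (0:ℝ) < s := lt_trans one_pos hs
  have h1 : 0 < s * (2 * s ^ 2 - (3 + p) * s + 2 * p) := by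
    nlinarith [mul_pos (sub_pos.mpr hs) hderiv]
  have hQ : 0 < 2 * s ^ 2 - (3 + p) * s + 2 * p := by
    rcases mul_pos_iff.mp h1 with ⟨_, h⟩ | ⟨h, _⟩
    · exact h
    · linarith
  have hf1 : 0 < s - (p + 3 - r) / 4 := by linarith
  have hR : (p + 3 + r) / 4 < s := by
    by_contra h
    push_neg at h
    nlinarith [mul_nonneg hf1.le (sub_nonneg.mpr h), hr2]
  refine ⟨hR, fun hbB => ?_⟩
  have hpb : p + b < s := by linarith
  have hs2 : (0:ℝ) < s ^ 2 := by positivity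
  have hqv : q * v = s - p := by
    rw [hv]
    field_simp
    nlinarith [hroot]
  exact ⟨hpb, by rw [hqv]; linarith⟩
end

section
/- Let b > 0, p > 0, q > 0 and let (u, v) with u > 0, v > 0 satisfy b u (1 - u) = v and p u v + q u v^2 = v. If in addition q v = b, then p + b > 1, u = 1/(p+b), and q = (p+b)^2/(p+b-1). -/
/-- If `(u, v)` with `u, v > 0` is a positive equilibrium
(`b u (1-u) = v` and `p u v + q u v^2 = v`) and moreover `q v = b`, then
`p + b > 1`, `u = 1/(p+b)` and `q = (p+b)^2/(p+b-1)`. -/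
theorem hopf_condition (b p q u v : ℝ) (hb : 0 < b) (hp : 0 < p) (hq : 0 < q)
    (hu : 0 < u) (hv : 0 < v)
    (heq1 : b * u * (1 - u) = v) (heq2 : p * u * v + q * u * v ^ 2 = v)
    (htrace : q * v = b) :
    1 < p + b ∧ u = 1 / (p + b) ∧ q = (p + b) ^ 2 / (p + b - 1) := by
  have hpb : 0 < p + b := by linarith
  -- from heq2: (p + q v) u = 1, so (p+b) u = 1
  have hkey : (p + b) * u = 1 := by
    have h : ((p + b) * u) * v = 1 * v := by
      rw [← htrace]; ring_nf; nlinarith [heq2]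
    exact mul_right_cancel₀ hv.ne' h
  have hu1 : u = 1 / (p + b) := by field_simp; linarith [hkey]
  -- u < 1 since 1 - u = v/(b u) > 0
  have h1u : 0 < 1 - u := by
    by_contra h
    push_neg at h
    nlinarith [mul_pos hb hu, mul_nonpos_of_nonneg_of_nonpos (mul_pos hb hu).le h]
  have hgt : 1 < p + b := by
    nlinarith
  refine ⟨hgt, hu1, ?_⟩
  -- q = b / v = 1/(u(1-u))
  have hq1 : q * (u * (1 - u)) = 1 := by
    have : q * (b * u * (1 - u)) = b := by rw [heq1]; exact htrace
    have hb' := hb.ne'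
    field_simp at this ⊢
    nlinarith [this]
  have hden : p + b - 1 ≠ 0 := by linarith
  rw [eq_div_iff hden]
  subst hu1
  field_simp at hq1 ⊢
  nlinarith [hq1]
end

section
/- Let s, z, w be positive real numbers, and define the complex numbers g20 = 2 · s[z^4(z+2) + w^2(3z^2 + 2z) - w^4(z+1) + i w(-z^2 + w^2 + 2 z w^2)] / (2 i w (w^2 + z^2)), g11 = s z (z^2 + 2z - i w)/(i w), and g21 = 2 · s^2 z (z+1)[-3z^2 + w^2(2z-1) - i w(3z^2 + 2z + w^2)] / (2 i w (w^2 + z^2)). Then Re(i g20 g11 + w g21) = - s^2 z^2 (z+1)(z+2)/w, which is strictly negative. -/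
/-!
Each coefficient has the shape `(a + b i) / (i x)` with `a b x` real, which equals `b/x - (a/x) i`,
so the real part of `i g20 g11 + w g21` is an explicit rational function of `s z w`. With
`D = w² + z²` it is `s² z / (w D)` times a polynomial in `z w` whose `w⁴` terms cancel and which
factors as `-z (z + 1) (z + 2) D`.
-/

namespace Complex

lemma ofReal_add_mul_I_div_I_mul_ofReal (a b x : ℝ) :
    ((a : ℂ) + b * I) / (I * x) = ((b / x : ℝ) : ℂ) + ((-a / x : ℝ) : ℂ) * I := by
  rw [div_eq_mul_inv, mul_inv, inv_I]
  push_cast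
  ring_nf
  rw [I_sq]
  ring

end Complex

open Complex in
/-- The first Lyapunov coefficient
`l1 = Re(i g20 g11 + w g21) = -s^2 z^2 (z+1)(z+2)/w < 0`. -/
theorem first_lyapunov_coefficient (s z w : ℝ) (hs : 0 < s) (hz : 0 < z) (hw : 0 < w)
    (g20 g11 g21 : ℂ)
    (hg20 : g20 = 2 * ((s : ℂ) * ((z : ℂ) ^ 4 * ((z : ℂ) + 2) +
      (w : ℂ) ^ 2 * (3 * (z : ℂ) ^ 2 + 2 * (z : ℂ)) - (w : ℂ) ^ 4 * ((z : ℂ) + 1) +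
      Complex.I * (w : ℂ) * (-(z : ℂ) ^ 2 + (w : ℂ) ^ 2 + 2 * (z : ℂ) * (w : ℂ) ^ 2)) /
      (2 * Complex.I * (w : ℂ) * ((w : ℂ) ^ 2 + (z : ℂ) ^ 2))))
    (hg11 : g11 = (s : ℂ) * (z : ℂ) * ((z : ℂ) ^ 2 + 2 * (z : ℂ) - Complex.I * (w : ℂ)) /
      (Complex.I * (w : ℂ)))
    (hg21 : g21 = 2 * ((s : ℂ) ^ 2 * (z : ℂ) * ((z : ℂ) + 1) *
      (-3 * (z : ℂ) ^ 2 + (w : ℂ) ^ 2 * (2 * (z : ℂ) - 1) -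
        Complex.I * (w : ℂ) * (3 * (z : ℂ) ^ 2 + 2 * (z : ℂ) + (w : ℂ) ^ 2)) /
      (2 * Complex.I * (w : ℂ) * ((w : ℂ) ^ 2 + (z : ℂ) ^ 2)))) :
    (Complex.I * g20 * g11 + (w : ℂ) * g21).re =
      -(s ^ 2 * z ^ 2 * (z + 1) * (z + 2) / w) ∧
    (Complex.I * g20 * g11 + (w : ℂ) * g21).re < 0 := by
  have h20 : g20 =
      (((s * (z ^ 4 * (z + 2) + w ^ 2 * (3 * z ^ 2 + 2 * z) - w ^ 4 * (z + 1)) : ℝ) : ℂ) +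
      ((s * w * (-z ^ 2 + w ^ 2 + 2 * z * w ^ 2) : ℝ) : ℂ) * I) /
      (I * ((w * (w ^ 2 + z ^ 2) : ℝ) : ℂ)) := by
    rw [hg20]; push_cast; field_simp
  have h11 : g11 = (((s * z * (z ^ 2 + 2 * z) : ℝ) : ℂ) + ((-(s * z * w) : ℝ) : ℂ) * I) /
      (I * (w : ℂ)) := by
    rw [hg11]; push_cast; ring
  have h21 : g21 = (((s ^ 2 * z * (z + 1) * (-3 * z ^ 2 + w ^ 2 * (2 * z - 1)) : ℝ) : ℂ) +
      ((-(s ^ 2 * z * (z + 1) * w * (3 * z ^ 2 + 2 * z + w ^ 2)) : ℝ) : ℂ) * I) /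
      (I * ((w * (w ^ 2 + z ^ 2) : ℝ) : ℂ)) := by
    rw [hg21]; push_cast; field_simp; ring
  have hl1 : (I * g20 * g11 + w * g21).re = -(s ^ 2 * z ^ 2 * (z + 1) * (z + 2) / w) := by
    simp only [h20, h11, h21, ofReal_add_mul_I_div_I_mul_ofReal, add_re, add_im, mul_re, mul_im,
      I_re, I_im, ofReal_re, ofReal_im]
    field_simp
    ring
  exact ⟨hl1, hl1 ▸ neg_neg_of_pos (by positivity)⟩
end

section
/- Let B, C, D, K, P, Q be positive real numbers with C ≤ 1 and C P K / D ≤ 1. If 8 B C^2 Q K^2 < (9D - CPK)√((D - CPK)(9D - CPK)) + 27 D^2 - 18 D C P K - C^2 P^2 K^2, then there is no pair (U, V) with U > 0, V > 0 satisfying B U (1 - U/K) = P U V + Q U V^2 and C(P U V + Q U V^2) = D V. -/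
/-!
At a positive equilibrium put `a = CPK` and `x = CK(P + QV)`. Eliminating `U` between the two
nullclines gives `BQC²K² (x - D) = x² (x - a)` with `x > max a D`. On `x > D` the function
`8x²(x - a)/(x - D)` has minimum `M = (9D - a)√((D - a)(9D - a)) + 27D² - 18Da - a²`, attained
at the double root `x = (3D + a + √((D - a)(9D - a)))/4` of the cubic `8x²(x - a) - M(x - D)`.
Hence `8BQC²K²` is at least that minimum, contradicting the hypothesis.
-/

open Real

noncomputable def cubicThreshold (a D : ℝ) : ℝ :=
  (9 * D - a) * √((D - a) * (9 * D - a)) + 27 * D ^ 2 - 18 * D * a - a ^ 2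

theorem cubicThreshold_mul_sub_le {a D x : ℝ} (hD : 0 ≤ D) (haD : a ≤ D) (hax : a ≤ x)
    (hDx : D ≤ x) : cubicThreshold a D * (x - D) ≤ 8 * x ^ 2 * (x - a) := by
  set r := √((D - a) * (9 * D - a)) with hr
  have hr0 : 0 ≤ r := sqrt_nonneg _
  have hr2 : r ^ 2 = (D - a) * (9 * D - a) := sq_sqrt (by nlinarith)
  have hfactor : (4 * x - 3 * D - a - r) ^ 2 * (2 * x - a + 3 * D + r) =
      4 * (8 * x ^ 2 * (x - a) - cubicThreshold a D * (x - D)) := by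
    rw [cubicThreshold, ← hr]
    linear_combination (r + (2 * x - a + 3 * D) - 2 * (4 * x - 3 * D - a)) * hr2
  have hnonneg : 0 ≤ (4 * x - 3 * D - a - r) ^ 2 * (2 * x - a + 3 * D + r) :=
    mul_nonneg (sq_nonneg _) (by linarith)
  linarith

section Equilibrium

variable {B C D K P Q U V : ℝ}

theorem equilibrium_predator_nullcline (hV : V ≠ 0)
    (h : C * (P * U * V + Q * U * V ^ 2) = D * V) : C * U * (P + Q * V) = D :=
  mul_right_cancel₀ hV (by linear_combination h)

theorem equilibrium_prey_nullcline (hK : K ≠ 0) (hU : U ≠ 0)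
    (h : B * U * (1 - U / K) = P * U * V + Q * U * V ^ 2) :
    B * (K - U) = K * V * (P + Q * V) := by
  field_simp at h
  linear_combination h

theorem equilibrium_cubic (hpred : C * U * (P + Q * V) = D)
    (hprey : B * (K - U) = K * V * (P + Q * V)) :
    B * Q * C ^ 2 * K ^ 2 * (C * K * (P + Q * V) - D) =
      (C * K * (P + Q * V)) ^ 2 * (C * K * (P + Q * V) - C * P * K) := by
  linear_combination (B * Q * C ^ 2 * K ^ 2) * hpred + (Q * C ^ 3 * K ^ 2 * (P + Q * V)) * hprey

end Equilibrium

theorem no_positive_equilibrium_nonscaled_general (B C D K P Q : ℝ)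
    (hB : 0 < B) (hC : 0 < C) (hD : 0 < D) (hK : 0 < K) (hQ : 0 < Q)
    (hR0 : C * P * K / D ≤ 1)
    (hcond : 8 * B * C ^ 2 * Q * K ^ 2 <
      (9 * D - C * P * K) * Real.sqrt ((D - C * P * K) * (9 * D - C * P * K)) +
        27 * D ^ 2 - 18 * D * C * P * K - C ^ 2 * P ^ 2 * K ^ 2) :
    ¬ ∃ U V : ℝ, 0 < U ∧ 0 < V ∧
      B * U * (1 - U / K) = P * U * V + Q * U * V ^ 2 ∧
      C * (P * U * V + Q * U * V ^ 2) = D * V := by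
  rintro ⟨U, V, hU, hV, hprey, hpred⟩
  have hpred' := equilibrium_predator_nullcline hV.ne' hpred
  have hcubic := equilibrium_cubic hpred' (equilibrium_prey_nullcline hK.ne' hU.ne' hprey)
  set x := C * K * (P + Q * V)
  have hx : 0 < x :=
    mul_pos (by positivity) (pos_of_mul_pos_right (hpred' ▸ hD) (by positivity))
  have hax : C * P * K < x := by nlinarith [mul_pos (mul_pos (mul_pos hC hK) hQ) hV]
  have hDx : D < x := by
    have ht : 0 ≤ B * Q * C ^ 2 * K ^ 2 := by positivity
    have hpos : 0 < x ^ 2 * (x - C * P * K) := mul_pos (by positivity) (sub_pos.mpr hax)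
    exact sub_pos.mp (pos_of_mul_pos_right (hcubic ▸ hpos) ht)
  have hbound := cubicThreshold_mul_sub_le hD.le ((div_le_one hD).mp hR0) hax.le hDx.le
  have hlt : 8 * (B * Q * C ^ 2 * K ^ 2) * (x - D) < cubicThreshold (C * P * K) D * (x - D) := by
    refine mul_lt_mul_of_pos_right ?_ (sub_pos.mpr hDx)
    rw [cubicThreshold]
    linarith
  linarith

/-- For positive `B, C, D, K, P, Q` with `C ≤ 1` and `CPK/D ≤ 1`,
if `8BC²QK² < (9D - CPK)√((D-CPK)(9D-CPK)) + 27D² - 18DCPK - C²P²K²`, then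
the non-scaled system has no positive equilibrium. -/
theorem no_positive_equilibrium_nonscaled (B C D K P Q : ℝ)
    (hB : 0 < B) (hC : 0 < C) (hD : 0 < D) (hK : 0 < K) (hP : 0 < P) (hQ : 0 < Q)
    (hC1 : C ≤ 1) (hR0 : C * P * K / D ≤ 1)
    (hcond : 8 * B * C ^ 2 * Q * K ^ 2 <
      (9 * D - C * P * K) * Real.sqrt ((D - C * P * K) * (9 * D - C * P * K)) +
        27 * D ^ 2 - 18 * D * C * P * K - C ^ 2 * P ^ 2 * K ^ 2) :
    ¬ ∃ U V : ℝ, 0 < U ∧ 0 < V ∧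
      B * U * (1 - U / K) = P * U * V + Q * U * V ^ 2 ∧
      C * (P * U * V + Q * U * V ^ 2) = D * V :=
  no_positive_equilibrium_nonscaled_general B C D K P Q hB hC hD hK hQ hR0 hcond
end
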